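/- For a > 1 and b < 0, the second derivative M″ of the Melnikov function has a unique zero h₂ on (0,∞); moreover h₂ ∈ (0, (a²-1)/2), M″(h) > 0 for 0 < h < h₂, and M″(h) < 0 for h > h₂. -/

import Mathlib

/-!
On `(0, ∞)`, with `s = √(2h)`,
`M''(h) = 2 (arctan (s/(a+1)) - arctan (s/(a-1)) - π)`
`         + 4 (2h - b)(a² - 1 - 2h) / (s ((a+1)² + 2h)((a-1)² + 2h))`.
The arctangent part lies in `(-4π, 0)`. Since `b < 0`, the fraction tends to `+∞` as `h → 0⁺`,
and it is `≤ 0` for `h ≥ (a² - 1)/2`, so `M''` is positive near `0` and negative from `(a² - 1)/2`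
on. On `(0, (a² - 1)/2]` the numerator of `M'''` over its common denominator is visibly negative,
so `M''` is strictly decreasing there and crosses zero exactly once.
-/

/-- The Melnikov function `M(h; a, b)` of the discontinuous SD oscillator. -/
noncomputable def Mel (a b h : ℝ) : ℝ :=
  -(Real.pi / 4) * (a + 1) ^ 2 * (5 * a ^ 2 + 10 * a + 4 * b + 5)
    - (15 * a ^ 2 + 4 * b + 5) * Real.sqrt h / Real.sqrt 2
    - (3 * a ^ 2 + 6 * a + 2 * b + 3) * Real.pi * h
    - (13 * Real.sqrt 2 / 3) * (h * Real.sqrt h)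
    - Real.pi * h ^ 2
    - (1 / 4) * (a ^ 2 - 2 * a + 2 * h + 1) * (5 * a ^ 2 - 10 * a + 4 * b + 2 * h + 5)
        * Real.arctan (Real.sqrt (2 * h) / (a - 1))
    + (1 / 4) * (a ^ 2 + 2 * a + 2 * h + 1) * (5 * a ^ 2 + 10 * a + 4 * b + 2 * h + 5)
        * Real.arctan (Real.sqrt (2 * h) / (a + 1))

open Real Filter Topology Set

lemma exists_unique_sign_change_of_strictAntiOn {f : ℝ → ℝ} {l r x₀ : ℝ} (hlx₀ : l < x₀)
    (hx₀r : x₀ < r) (hcont : ContinuousOn f (Ioc l r)) (hanti : StrictAntiOn f (Ioc l r))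
    (hpos : 0 < f x₀) (hneg : ∀ x, r ≤ x → f x < 0) :
    ∃ z, l < z ∧ z < r ∧ f z = 0 ∧ (∀ x, l < x → x < z → 0 < f x) ∧
      (∀ x, z < x → f x < 0) ∧ ∀ x, l < x → f x = 0 → x = z := by
  obtain ⟨z, ⟨hx₀z, hzr_le⟩, hz⟩ := intermediate_value_Icc' hx₀r.le
    (hcont.mono (Icc_subset_Ioc_iff hx₀r.le |>.2 ⟨hlx₀, le_rfl⟩)) ⟨(hneg r le_rfl).le, hpos.le⟩
  have hlz : l < z := hlx₀.trans_le hx₀z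
  have hzr : z < r := hzr_le.lt_of_ne (by rintro rfl; exact (hneg z le_rfl).ne hz)
  have hleft : ∀ x, l < x → x < z → 0 < f x := fun x hlx hxz =>
    hz ▸ hanti ⟨hlx, (hxz.trans hzr).le⟩ ⟨hlz, hzr.le⟩ hxz
  have hright : ∀ x, z < x → f x < 0 := fun x hzx => by
    rcases le_or_gt x r with hxr | hrx
    · exact hz ▸ hanti ⟨hlz, hzr.le⟩ ⟨hlz.trans hzx, hxr⟩ hzx
    · exact hneg x hrx.le
  refine ⟨z, hlz, hzr, hz, hleft, hright, fun x hlx hx => ?_⟩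
  rcases lt_trichotomy x z with hxz | rfl | hzx
  · exact absurd hx (hleft x hlx hxz).ne'
  · rfl
  · exact absurd hx (hright x hzx).ne

section Derivatives

variable {a b c h : ℝ}

lemma hasDerivAt_sqrt_two_mul (hh : 0 < h) :
    HasDerivAt (fun x => √(2 * x)) (√(2 * h))⁻¹ h := by
  have hs : 0 < √(2 * h) := by positivity
  refine ((hasDerivAt_sqrt (by positivity)).comp h ((hasDerivAt_id h).const_mul 2)).congr_deriv ?_
  field_simp
  simp

lemma hasDerivAt_arctan_sqrt_two_mul_div (hc : c ≠ 0) (hh : 0 < h) :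
    HasDerivAt (fun x => arctan (√(2 * x) / c)) (c / (√(2 * h) * (c ^ 2 + 2 * h))) h := by
  have hs : 0 < √(2 * h) := by positivity
  have hs2 : √(2 * h) ^ 2 = 2 * h := sq_sqrt (by positivity)
  refine ((hasDerivAt_arctan _).comp h
    ((hasDerivAt_sqrt_two_mul hh).div_const c)).congr_deriv ?_
  field_simp
  rw [hs2]

noncomputable def melDeriv (a b h : ℝ) : ℝ :=
  -(3 * (a + 1) ^ 2 + 2 * b) * π - 6 * √(2 * h) - 2 * π * h
    - (3 * (a - 1) ^ 2 + 2 * b + 2 * h) * arctan (√(2 * h) / (a - 1))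
    + (3 * (a + 1) ^ 2 + 2 * b + 2 * h) * arctan (√(2 * h) / (a + 1))

noncomputable def melDeriv2 (a b h : ℝ) : ℝ :=
  2 * (arctan (√(2 * h) / (a + 1)) - arctan (√(2 * h) / (a - 1)) - π)
    + 4 * (2 * h - b) * (a ^ 2 - 1 - 2 * h)
      / (√(2 * h) * ((a + 1) ^ 2 + 2 * h) * ((a - 1) ^ 2 + 2 * h))

noncomputable def melDeriv3 (a b h : ℝ) : ℝ :=
  4 * ((b * (2 * h + (a ^ 2 - 1)) - 8 * h ^ 2) * ((a + 1) ^ 2 + 2 * h) * ((a - 1) ^ 2 + 2 * h)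
      - 4 * h * (2 * h - b) * (a ^ 2 - 1 - 2 * h) * ((a + 1) ^ 2 + 2 * h + ((a - 1) ^ 2 + 2 * h)))
    / (2 * h * √(2 * h) * (((a + 1) ^ 2 + 2 * h) * ((a - 1) ^ 2 + 2 * h)) ^ 2)

lemma hasDerivAt_Mel (ha₁ : a - 1 ≠ 0) (ha₂ : a + 1 ≠ 0) (hh : 0 < h) :
    HasDerivAt (Mel a b) (melDeriv a b h) h := by
  have hsqrt := hasDerivAt_sqrt hh.ne'
  have hA₁ := hasDerivAt_arctan_sqrt_two_mul_div ha₁ hh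
  have hA₂ := hasDerivAt_arctan_sqrt_two_mul_div ha₂ hh
  have hx := hasDerivAt_id' (x := h)
  refine ((((((hasDerivAt_const h
    (-(π / 4) * (a + 1) ^ 2 * (5 * a ^ 2 + 10 * a + 4 * b + 5))).sub
    ((hsqrt.const_mul (15 * a ^ 2 + 4 * b + 5)).div_const √2)).sub
    (hx.const_mul ((3 * a ^ 2 + 6 * a + 2 * b + 3) * π))).sub
    ((hx.mul hsqrt).const_mul (13 * √2 / 3))).sub
    ((hasDerivAt_pow 2 h).const_mul π)).sub
    (((((hx.const_mul 2).const_add (a ^ 2 - 2 * a)).add_const 1).const_mul (1 / 4)).mul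
      (((hx.const_mul 2).const_add (5 * a ^ 2 - 10 * a + 4 * b)).add_const 5) |>.mul hA₁)).add
    (((((hx.const_mul 2).const_add (a ^ 2 + 2 * a)).add_const 1).const_mul (1 / 4)).mul
      (((hx.const_mul 2).const_add (5 * a ^ 2 + 10 * a + 4 * b)).add_const 5) |>.mul hA₂)
    |>.congr_deriv ?_
  have hsqrt_two_mul : √(2 * h) = √2 * √h := sqrt_mul zero_le_two h
  have : 0 < √2 := by positivity
  have : 0 < √h := by positivity
  have e₁ : (15 * a ^ 2 + 4 * b + 5) * (1 / (2 * √h)) / √2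
      = (15 * a ^ 2 + 4 * b + 5) / (2 * √(2 * h)) := by
    rw [hsqrt_two_mul]
    field_simp
  have e₂ : 13 * √2 / 3 * (1 * √h + h * (1 / (2 * √h))) = 13 / 2 * √(2 * h) := by
    rw [hsqrt_two_mul]
    field_simp
    rw [sq_sqrt hh.le]
    ring
  simp only [Pi.mul_apply, e₁, e₂, melDeriv]
  have hs : 0 < √(2 * h) := by positivity
  have hh_eq : h = √(2 * h) ^ 2 / 2 := by rw [sq_sqrt (by positivity)]; ring
  set s := √(2 * h)
  rw [hh_eq]
  field_simp
  ring

lemma hasDerivAt_melDeriv (ha₁ : a - 1 ≠ 0) (ha₂ : a + 1 ≠ 0) (hh : 0 < h) :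
    HasDerivAt (melDeriv a b) (melDeriv2 a b h) h := by
  have hx := hasDerivAt_id' (x := h)
  refine ((((hasDerivAt_const h (-(3 * (a + 1) ^ 2 + 2 * b) * π)).sub
    ((hasDerivAt_sqrt_two_mul hh).const_mul 6)).sub (hx.const_mul (2 * π))).sub
    (((hx.const_mul 2).const_add (3 * (a - 1) ^ 2 + 2 * b)).mul
      (hasDerivAt_arctan_sqrt_two_mul_div ha₁ hh))).add
    (((hx.const_mul 2).const_add (3 * (a + 1) ^ 2 + 2 * b)).mul
      (hasDerivAt_arctan_sqrt_two_mul_div ha₂ hh)) |>.congr_deriv ?_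
  unfold melDeriv2
  have hs : 0 < √(2 * h) := by positivity
  have hh_eq : h = √(2 * h) ^ 2 / 2 := by rw [sq_sqrt (by positivity)]; ring
  set s := √(2 * h)
  rw [hh_eq]
  field_simp
  ring

lemma hasDerivAt_melDeriv2 (ha₁ : a - 1 ≠ 0) (ha₂ : a + 1 ≠ 0) (hh : 0 < h) :
    HasDerivAt (melDeriv2 a b) (melDeriv3 a b h) h := by
  have hx := hasDerivAt_id' (x := h)
  have hs : 0 < √(2 * h) := by positivity
  have hden : √(2 * h) * ((a + 1) ^ 2 + 2 * h) * ((a - 1) ^ 2 + 2 * h) ≠ 0 := by positivity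
  refine ((((hasDerivAt_arctan_sqrt_two_mul_div ha₂ hh).sub
    (hasDerivAt_arctan_sqrt_two_mul_div ha₁ hh)).sub_const π).const_mul 2).add
    ((((hx.const_mul 2).sub_const b).const_mul 4
      |>.mul ((hx.const_mul 2).const_sub (a ^ 2 - 1))).div
      (((hasDerivAt_sqrt_two_mul hh).mul ((hx.const_mul 2).const_add ((a + 1) ^ 2))).mul
        ((hx.const_mul 2).const_add ((a - 1) ^ 2))) hden) |>.congr_deriv ?_
  simp only [Pi.mul_apply, melDeriv3]
  have hh_eq : h = √(2 * h) ^ 2 / 2 := by rw [sq_sqrt (by positivity)]; ring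
  set s := √(2 * h)
  rw [hh_eq]
  field_simp
  ring

lemma eqOn_deriv_deriv_Mel (ha₁ : a - 1 ≠ 0) (ha₂ : a + 1 ≠ 0) :
    EqOn (deriv (deriv (Mel a b))) (melDeriv2 a b) (Ioi 0) := fun h hh => by
  have hderiv : deriv (Mel a b) =ᶠ[𝓝 h] melDeriv a b := by
    filter_upwards [Ioi_mem_nhds hh] with x hx using (hasDerivAt_Mel ha₁ ha₂ hx).deriv
  rw [hderiv.deriv_eq, (hasDerivAt_melDeriv ha₁ ha₂ hh).deriv]

lemma continuousOn_melDeriv2 (ha₁ : a - 1 ≠ 0) (ha₂ : a + 1 ≠ 0) :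
    ContinuousOn (melDeriv2 a b) (Ioi 0) := fun _ hh =>
  (hasDerivAt_melDeriv2 ha₁ ha₂ hh).continuousAt.continuousWithinAt

end Derivatives

section Sign

variable {a b h : ℝ}

lemma melDeriv3_neg (hb : b < 0) (hh : 0 < h) (hhc : h ≤ (a ^ 2 - 1) / 2) :
    melDeriv3 a b h < 0 := by
  have hPp : 0 < (a + 1) ^ 2 + 2 * h := by positivity
  have hPm : 0 < (a - 1) ^ 2 + 2 * h := by positivity
  refine div_neg_of_neg_of_pos (mul_neg_of_pos_of_neg four_pos ?_) (by positivity)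
  have hfirst : (b * (2 * h + (a ^ 2 - 1)) - 8 * h ^ 2) * ((a + 1) ^ 2 + 2 * h)
      * ((a - 1) ^ 2 + 2 * h) < 0 :=
    mul_neg_of_neg_of_pos (mul_neg_of_neg_of_pos (by nlinarith) hPp) hPm
  have hsecond : 0 ≤ 4 * h * (2 * h - b) * (a ^ 2 - 1 - 2 * h)
      * ((a + 1) ^ 2 + 2 * h + ((a - 1) ^ 2 + 2 * h)) := by
    have : 0 ≤ a ^ 2 - 1 - 2 * h := by linarith
    have : 0 < 2 * h - b := by linarith
    positivity
  linarith

lemma strictAntiOn_melDeriv2 (ha₁ : a - 1 ≠ 0) (ha₂ : a + 1 ≠ 0) (hb : b < 0) :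
    StrictAntiOn (melDeriv2 a b) (Ioc 0 ((a ^ 2 - 1) / 2)) := by
  refine strictAntiOn_of_deriv_neg (convex_Ioc _ _)
    ((continuousOn_melDeriv2 ha₁ ha₂).mono Ioc_subset_Ioi_self) fun x hx => ?_
  rw [interior_Ioc] at hx
  rw [(hasDerivAt_melDeriv2 ha₁ ha₂ hx.1).deriv]
  exact melDeriv3_neg hb hx.1 hx.2.le

lemma arctan_sub_arctan_sub_pi_mem_Ioo (x y : ℝ) : arctan x - arctan y - π ∈ Ioo (-2 * π) 0 := by
  constructor <;>
  linarith [arctan_lt_pi_div_two x, neg_pi_div_two_lt_arctan x, arctan_lt_pi_div_two y,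
    neg_pi_div_two_lt_arctan y]

lemma melDeriv2_neg (hb : b < 0) (hh : 0 < h) (hhc : (a ^ 2 - 1) / 2 ≤ h) :
    melDeriv2 a b h < 0 := by
  have harctan :=
    (arctan_sub_arctan_sub_pi_mem_Ioo (√(2 * h) / (a + 1)) (√(2 * h) / (a - 1))).2
  have hfrac : 4 * (2 * h - b) * (a ^ 2 - 1 - 2 * h)
      / (√(2 * h) * ((a + 1) ^ 2 + 2 * h) * ((a - 1) ^ 2 + 2 * h)) ≤ 0 :=
    div_nonpos_of_nonpos_of_nonneg
      (mul_nonpos_of_nonneg_of_nonpos (by linarith) (by linarith)) (by positivity)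
  unfold melDeriv2
  linarith

lemma tendsto_sqrt_two_mul_nhdsGT_zero :
    Tendsto (fun h : ℝ => √(2 * h)) (𝓝[>] 0) (𝓝[>] 0) := by
  refine tendsto_nhdsWithin_of_tendsto_nhds_of_eventually_within _ ?_ ?_
  · exact ((continuous_const.mul continuous_id).sqrt.tendsto' 0 0 (by simp)).mono_left
      nhdsWithin_le_nhds
  · filter_upwards [self_mem_nhdsWithin] with h (hh : 0 < h)
    exact sqrt_pos.2 (by positivity)

lemma tendsto_melDeriv2_nhdsGT_zero (ha : 1 < a) (hb : b < 0) :
    Tendsto (melDeriv2 a b) (𝓝[>] 0) atTop := by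
  set g : ℝ → ℝ := fun h => 4 * (2 * h - b) * (a ^ 2 - 1 - 2 * h)
    / (((a + 1) ^ 2 + 2 * h) * ((a - 1) ^ 2 + 2 * h))
  have hg : Tendsto g (𝓝[>] 0) (𝓝 (g 0)) := by
    have : ((a + 1) ^ 2 + 2 * 0) * ((a - 1) ^ 2 + 2 * 0) ≠ 0 := by
      have : a - 1 ≠ 0 := by linarith
      have : a + 1 ≠ 0 := by linarith
      positivity
    exact (ContinuousAt.tendsto (by fun_prop (disch := exact this))).mono_left nhdsWithin_le_nhds
  have hg0 : 0 < g 0 := by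
    have : 0 < a - 1 := by linarith
    have : 0 < a ^ 2 - 1 := by nlinarith
    exact div_pos (by nlinarith) (by positivity)
  have harctan (h : ℝ) :
      -4 * π ≤ 2 * (arctan (√(2 * h) / (a + 1)) - arctan (√(2 * h) / (a - 1)) - π) := by
    linarith [(arctan_sub_arctan_sub_pi_mem_Ioo (√(2 * h) / (a + 1)) (√(2 * h) / (a - 1))).1]
  refine (tendsto_atTop_add_left_of_le _ _ harctan (hg.pos_mul_atTop hg0
    (tendsto_inv_nhdsGT_zero.comp tendsto_sqrt_two_mul_nhdsGT_zero))).congr fun h => ?_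
  simp only [melDeriv2, g, Function.comp_apply, div_eq_mul_inv, mul_inv]
  ring

end Sign

/-- For `a > 1` and `b < 0`, `M''` has a unique zero `h₂` on `(0, ∞)`,
with `h₂ < (a²-1)/2`, `M'' > 0` on `(0, h₂)` and `M'' < 0` on `(h₂, ∞)`. -/
theorem melnikov_second_deriv_unique_zero (a b : ℝ) (ha : 1 < a) (hb : b < 0) :
    ∃ h₂ : ℝ, 0 < h₂ ∧ h₂ < (a ^ 2 - 1) / 2 ∧
      deriv (deriv (Mel a b)) h₂ = 0 ∧
      (∀ h : ℝ, 0 < h → h < h₂ → 0 < deriv (deriv (Mel a b)) h) ∧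
      (∀ h : ℝ, h₂ < h → deriv (deriv (Mel a b)) h < 0) ∧
      (∀ h : ℝ, 0 < h → deriv (deriv (Mel a b)) h = 0 → h = h₂) := by
  have ha₁ : a - 1 ≠ 0 := by linarith
  have ha₂ : a + 1 ≠ 0 := by linarith
  have hc : 0 < (a ^ 2 - 1) / 2 := by nlinarith
  have hM := eqOn_deriv_deriv_Mel (b := b) ha₁ ha₂
  have hMc : EqOn _ _ (Ioc 0 ((a ^ 2 - 1) / 2)) := hM.mono Ioc_subset_Ioi_self
  obtain ⟨h₀, hpos, hh₀, hh₀c⟩ :=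
    (((tendsto_melDeriv2_nhdsGT_zero ha hb).eventually_gt_atTop 0).and (Ioo_mem_nhdsGT hc)).exists
  refine exists_unique_sign_change_of_strictAntiOn hh₀ hh₀c
    (((continuousOn_melDeriv2 ha₁ ha₂).mono Ioc_subset_Ioi_self).congr hMc)
    ((strictAntiOn_melDeriv2 ha₁ ha₂ hb).congr hMc.symm) (hM hh₀ ▸ hpos) fun h hh => ?_
  rw [hM (hc.trans_le hh)]
  exact melDeriv2_neg hb (hc.trans_le hh) hh
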